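/- Let X be a Banach lattice and x* a lattice homomorphism with ‖x*‖ = 1. Then x* attains its norm if and only if there exists an increasing sequence (x_n) in the positive part of the closed unit ball of X such that x*(x_n) → 1. -/

import Mathlib

/-- A real-valued lattice homomorphism on a Banach lattice. -/
def IsLatticeHomFunctional {X : Type*} [NormedAddCommGroup X] [Lattice X] [HasSolidNorm X] [IsOrderedAddMonoid X] [NormedSpace ℝ X]
    (f : X →L[ℝ] ℝ) : Prop :=
  ∀ x y : X, f (x ⊔ y) = max (f x) (f y)

/-- An atom of a Banach lattice: a positive element generating a one-dimensional ideal. -/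
def IsLatAtom {X : Type*} [NormedAddCommGroup X] [Lattice X] [HasSolidNorm X] [IsOrderedAddMonoid X] [NormedSpace ℝ X] (x₀ : X) : Prop :=
  0 < x₀ ∧ ∀ y : X, 0 ≤ y → y ≤ x₀ → ∃ r : ℝ, y = r • x₀

/-- `l` is the coordinate functional of the atom `x₀`: the band projection onto the span of
`x₀` is `x ↦ l x • x₀`, i.e. `x - l x • x₀` is disjoint from `x₀` for every `x`. -/
def IsCoordinateFunctional {X : Type*} [NormedAddCommGroup X] [Lattice X] [HasSolidNorm X] [IsOrderedAddMonoid X] [NormedSpace ℝ X]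
    (l : X →L[ℝ] ℝ) (x₀ : X) : Prop :=
  ∀ x : X, |x - l x • x₀| ⊓ x₀ = 0

/-- An equivalent lattice norm on `X`. -/
structure LatticeNorm (X : Type*) [NormedAddCommGroup X] [Lattice X] [NormedSpace ℝ X] where
  n : X → ℝ
  add_le : ∀ x y : X, n (x + y) ≤ n x + n y
  smul_eq : ∀ (r : ℝ) (x : X), n (r • x) = |r| * n x
  eq_zero_of : ∀ x : X, n x = 0 → x = 0
  mono : ∀ x y : X, |x| ≤ |y| → n x ≤ n y
  lower : ∃ c : ℝ, 0 < c ∧ ∀ x : X, c * ‖x‖ ≤ n x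
  upper : ∃ C : ℝ, 0 < C ∧ ∀ x : X, n x ≤ C * ‖x‖

/-!
A lattice homomorphism `f` is positive, so along an increasing sequence `xₙ` with `f xₙ`
convergent the increments `dₖ = f xₖ₊₁ - f xₖ` are nonnegative and summable; the increments
`xₖ₊₁ - xₖ` in `X` need not be. Fix `e = x_N` with `f e > 0` and replace `xₖ₊₁ - xₖ` by its
infimum `wₖ` with `|(dₖ / f e) • e|`. Since `f` preserves infima, `f wₖ = dₖ`, while
`‖wₖ‖ ≤ dₖ ‖e‖ / f e` is summable. The partial sums `x₀ + ∑ₖ<K wₖ` lie between `x₀` and `x_K`, so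
by solidity of the norm they stay in the unit ball; their limit lies in the ball too and `f` sends
it to `lim f xₙ`.
-/

namespace IsLatticeHomFunctional

variable {X : Type*} [NormedAddCommGroup X] [Lattice X] [HasSolidNorm X] [IsOrderedAddMonoid X]
  [NormedSpace ℝ X] {f : X →L[ℝ] ℝ}

theorem map_abs (hf : IsLatticeHomFunctional f) (x : X) : f |x| = |f x| := by
  rw [abs, hf, map_neg, abs_eq_max_neg]

theorem map_inf (hf : IsLatticeHomFunctional f) (x y : X) : f (x ⊓ y) = min (f x) (f y) := by
  rw [← neg_neg (x ⊓ y), neg_inf, map_neg, hf, map_neg, map_neg, max_neg_neg, neg_neg]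

theorem monotone (hf : IsLatticeHomFunctional f) : Monotone f := by
  intro x y hxy
  have h := hf (y - x) 0
  rw [sup_eq_left.mpr (sub_nonneg.mpr hxy), map_zero, map_sub] at h
  linarith [le_max_right (f y - f x) 0]

end IsLatticeHomFunctional

section truncatedIncrement

variable {X : Type*} [NormedAddCommGroup X] [Lattice X] [NormedSpace ℝ X]

/-- The order need not be compatible with scalar multiplication, hence `|c • e|` rather than
`c • e` as the cap. -/
noncomputable def truncatedIncrement (f : X →L[ℝ] ℝ) (x : ℕ → X) (e : X) (k : ℕ) : X :=
  (x (k + 1) - x k) ⊓ |((f (x (k + 1)) - f (x k)) / f e) • e|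

variable {f : X →L[ℝ] ℝ} {x : ℕ → X} {e : X}

theorem truncatedIncrement_le (k : ℕ) : truncatedIncrement f x e k ≤ x (k + 1) - x k :=
  inf_le_left

variable [IsOrderedAddMonoid X]

theorem truncatedIncrement_nonneg (hx : Monotone x) (k : ℕ) : 0 ≤ truncatedIncrement f x e k :=
  le_inf (sub_nonneg.mpr (hx k.le_succ)) (abs_nonneg _)

theorem add_sum_truncatedIncrement_le (K : ℕ) :
    x 0 + ∑ k ∈ Finset.range K, truncatedIncrement f x e k ≤ x K :=
  calc x 0 + ∑ k ∈ Finset.range K, truncatedIncrement f x e k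
      ≤ x 0 + ∑ k ∈ Finset.range K, (x (k + 1) - x k) :=
        add_le_add_right (Finset.sum_le_sum fun k _ => truncatedIncrement_le k) _
    _ = x K := by rw [Finset.sum_range_sub, add_sub_cancel]

variable [HasSolidNorm X]

theorem IsLatticeHomFunctional.map_truncatedIncrement (hf : IsLatticeHomFunctional f)
    (hx : Monotone x) (hfe : 0 < f e) (k : ℕ) :
    f (truncatedIncrement f x e k) = f (x (k + 1)) - f (x k) := by
  have hd : 0 ≤ f (x (k + 1)) - f (x k) := sub_nonneg.mpr (hf.monotone (hx k.le_succ))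
  rw [truncatedIncrement, hf.map_inf, hf.map_abs, map_smul, smul_eq_mul,
    div_mul_cancel₀ _ hfe.ne', abs_of_nonneg hd, map_sub, min_self]

theorem IsLatticeHomFunctional.norm_truncatedIncrement_le (hf : IsLatticeHomFunctional f)
    (hx : Monotone x) (hfe : 0 < f e) (k : ℕ) :
    ‖truncatedIncrement f x e k‖ ≤ (f (x (k + 1)) - f (x k)) / f e * ‖e‖ := by
  have hc : 0 ≤ (f (x (k + 1)) - f (x k)) / f e :=
    div_nonneg (sub_nonneg.mpr (hf.monotone (hx k.le_succ))) hfe.le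
  calc ‖truncatedIncrement f x e k‖ ≤ ‖|((f (x (k + 1)) - f (x k)) / f e) • e|‖ := by
        apply norm_le_norm_of_abs_le_abs
        rw [abs_of_nonneg (truncatedIncrement_nonneg hx k), abs_abs]
        exact inf_le_right
    _ = (f (x (k + 1)) - f (x k)) / f e * ‖e‖ := by
        rw [norm_abs_eq_norm, norm_smul, Real.norm_of_nonneg hc]

theorem IsLatticeHomFunctional.summable_truncatedIncrement [CompleteSpace X]
    (hf : IsLatticeHomFunctional f) (hx : Monotone x) (hfe : 0 < f e) {L : ℝ}
    (hxL : Filter.Tendsto (fun n => f (x n)) Filter.atTop (nhds L)) :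
    Summable (truncatedIncrement f x e) := by
  have hd : HasSum (fun k => f (x (k + 1)) - f (x k)) (L - f (x 0)) := by
    refine (hasSum_iff_tendsto_nat_of_nonneg (fun k => ?_) _).mpr ?_
    · exact sub_nonneg.mpr (hf.monotone (hx k.le_succ))
    · simpa only [Finset.sum_range_sub fun k => f (x k)] using hxL.sub_const (f (x 0))
  exact .of_norm_bounded ((hd.summable.div_const (f e)).mul_right ‖e‖)
    (hf.norm_truncatedIncrement_le hx hfe)

theorem IsLatticeHomFunctional.exists_norm_le_apply_eq_of_tendsto [CompleteSpace X]
    (hf : IsLatticeHomFunctional f) (hx : Monotone x) (hx0 : 0 ≤ x 0) {C L : ℝ}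
    (hC : ∀ n, ‖x n‖ ≤ C) (hL : 0 < L)
    (hxL : Filter.Tendsto (fun n => f (x n)) Filter.atTop (nhds L)) :
    ∃ y : X, ‖y‖ ≤ C ∧ f y = L := by
  obtain ⟨N, hfe⟩ := (hxL.eventually (lt_mem_nhds hL)).exists
  set s : ℕ → X := fun K => x 0 + ∑ k ∈ Finset.range K, truncatedIncrement f x (x N) k
  have hs : Filter.Tendsto s Filter.atTop (nhds (x 0 + ∑' k, truncatedIncrement f x (x N) k)) :=
    ((hf.summable_truncatedIncrement hx hfe hxL).hasSum.tendsto_sum_nat).const_add (x 0)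
  have hs_norm (K : ℕ) : ‖s K‖ ≤ C := by
    have hs0 : 0 ≤ s K :=
      add_nonneg hx0 (Finset.sum_nonneg fun k _ => truncatedIncrement_nonneg hx k)
    refine (norm_le_norm_of_abs_le_abs ?_).trans (hC K)
    rw [abs_of_nonneg hs0, abs_of_nonneg (hs0.trans (add_sum_truncatedIncrement_le K))]
    exact add_sum_truncatedIncrement_le K
  have hfs (K : ℕ) : f (s K) = f (x K) := by
    simp only [s, map_add, map_sum, hf.map_truncatedIncrement hx hfe]
    rw [Finset.sum_range_sub fun k => f (x k), add_sub_cancel]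
  refine ⟨_, le_of_tendsto' hs.norm hs_norm,
    tendsto_nhds_unique ((f.continuous.tendsto _).comp hs) ?_⟩
  simpa only [Function.comp_def, hfs] using hxL

end truncatedIncrement

theorem latticeHom_attains_norm_iff_increasing_sequence_general
    {X : Type*} [NormedAddCommGroup X] [Lattice X] [HasSolidNorm X] [IsOrderedAddMonoid X] [NormedSpace ℝ X] [CompleteSpace X]
    (f : X →L[ℝ] ℝ) (hf : IsLatticeHomFunctional f) :
    (∃ x : X, ‖x‖ ≤ 1 ∧ |f x| = 1) ↔
      ∃ x : ℕ → X, Monotone x ∧ (∀ n, 0 ≤ x n ∧ ‖x n‖ ≤ 1) ∧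
        Filter.Tendsto (fun n => f (x n)) Filter.atTop (nhds 1) := by
  constructor
  · rintro ⟨x, hx, hfx⟩
    refine ⟨fun _ => |x|, monotone_const,
      fun _ => ⟨abs_nonneg x, (norm_abs_eq_norm x).trans_le hx⟩, ?_⟩
    simpa only [hf.map_abs, hfx] using tendsto_const_nhds
  · rintro ⟨x, hx, hx1, hxL⟩
    obtain ⟨y, hy, hfy⟩ :=
      hf.exists_norm_le_apply_eq_of_tendsto hx (hx1 0).1 (fun n => (hx1 n).2) one_pos hxL
    exact ⟨y, hy, by rw [hfy, abs_one]⟩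

/-- a norm-one lattice homomorphism on a Banach lattice attains its norm iff
there is an increasing sequence in the positive part of the unit ball on which the
homomorphism tends to `1`. -/
theorem latticeHom_attains_norm_iff_increasing_sequence
    {X : Type*} [NormedAddCommGroup X] [Lattice X] [HasSolidNorm X] [IsOrderedAddMonoid X] [NormedSpace ℝ X] [CompleteSpace X]
    (f : X →L[ℝ] ℝ) (hf : IsLatticeHomFunctional f) (hf1 : ‖f‖ = 1) :
    (∃ x : X, ‖x‖ ≤ 1 ∧ |f x| = 1) ↔
      ∃ x : ℕ → X, Monotone x ∧ (∀ n, 0 ≤ x n ∧ ‖x n‖ ≤ 1) ∧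
        Filter.Tendsto (fun n => f (x n)) Filter.atTop (nhds 1) :=
  latticeHom_attains_norm_iff_increasing_sequence_general f hf
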